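/- Let (X,d,μ) be a space of homogeneous type with open balls and E ⊆ X non-empty. If there exists α > 0 with d(·,E)^{-α} ∈ A₁(X,d,μ), then the maximal hole function ρ_{d,E} is doubling: there exists C > 0 with ρ_{d,E}(B_d(x,2r)) ≤ C·ρ_{d,E}(B_d(x,r)) for all x ∈ X, r > 0. -/

import Mathlib

open MeasureTheory ENNReal Set

namespace WPA1

variable {X : Type*}

/-- `d` is a quasi-distance on `X` with triangular constant `K`. -/
def QD (d : X → X → ℝ) (K : ℝ) : Prop :=
  1 ≤ K ∧ (∀ x y, 0 ≤ d x y) ∧ (∀ x y, d x y = 0 ↔ x = y) ∧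
    (∀ x y, d x y = d y x) ∧ ∀ x y z, d x z ≤ K * (d x y + d y z)

/-- The `d`-ball of center `x` and radius `r`. -/
def ball (d : X → X → ℝ) (x : X) (r : ℝ) : Set X := {y | d x y < r}

/-- The optimal (least) triangular constant of `d`. -/
noncomputable def Kopt (d : X → X → ℝ) : ℝ := sInf {K | QD d K}

/-- Distance from a point to a set: `d(x,E) = inf_{e ∈ E} d(x,e)`. -/
noncomputable def distE (d : X → X → ℝ) (E : Set X) (x : X) : ℝ :=
  sInf ((d x) '' E)

/-- The maximal `E`-free hole function
`ρ_{d,E}(B_d(x,r)) = sup {0 < s ≤ 2Kr : ∃ y, B_d(y,s) ⊆ B_d(x,r) \ E}`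
(with value `0` when the set is empty, by `Real.sSup` conventions). -/
noncomputable def hole (d : X → X → ℝ) (K : ℝ) (E : Set X) (x : X) (r : ℝ) : ℝ :=
  sSup {s | 0 < s ∧ s ≤ 2 * K * r ∧ ∃ y, ball d y s ⊆ ball d x r \ E}

/-- The maximal hole function `ρ_{d,E}` is doubling with constant `C`. -/
def HoleDoubling (d : X → X → ℝ) (K : ℝ) (E : Set X) (C : ℝ) : Prop :=
  ∀ x r, 0 < r → hole d K E x (2 * r) ≤ C * hole d K E x r

/-- The `d`-balls are open and form neighborhood bases: the ambient topology is
the one induced by the quasi-distance `d`. -/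
def BallsBasis [TopologicalSpace X] (d : X → X → ℝ) : Prop :=
  (∀ x r, IsOpen (ball d x r)) ∧ ∀ x, ∀ U ∈ nhds x, ∃ r > 0, ball d x r ⊆ U

/-- The measure `μ` is doubling (with constant `A`) on `d`-balls, which have
positive finite measure; i.e. `(X,d,μ)` is a space of homogeneous type. -/
def DoublingBalls [MeasurableSpace X] (μ : Measure X) (d : X → X → ℝ) (A : ℝ) : Prop :=
  ∀ x r, 0 < r → 0 < μ (ball d x r) ∧ μ (ball d x r) < ⊤ ∧
    μ (ball d x (2 * r)) ≤ ENNReal.ofReal A * μ (ball d x r)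

/-- `E` is `(σ,γ)`-weakly porous with respect to `d` and `μ`. -/
def WeaklyPorousWith [MeasurableSpace X] (μ : Measure X) (d : X → X → ℝ) (K : ℝ)
    (E : Set X) (σ γ : ℝ) : Prop :=
  ∀ x r, 0 < r → ∃ (n : ℕ) (c : Fin n → X) (ρ : Fin n → ℝ),
    (∀ i j, i ≠ j → Disjoint (ball d (c i) (ρ i)) (ball d (c j) (ρ j))) ∧
    (∀ i, ball d (c i) (ρ i) ⊆ ball d x r \ E) ∧
    (∀ i, γ * hole d K E x r ≤ ρ i) ∧
    (∀ i, ρ i ≤ 2 * K * r) ∧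
    ENNReal.ofReal σ * μ (ball d x r) ≤ ∑ i, μ (ball d (c i) (ρ i))

/-- `E` is weakly porous with respect to `d` and `μ`. -/
def WeaklyPorous [MeasurableSpace X] (μ : Measure X) (d : X → X → ℝ) (K : ℝ)
    (E : Set X) : Prop :=
  ∃ σ γ : ℝ, σ ∈ Set.Ioo (0:ℝ) 1 ∧ γ ∈ Set.Ioo (0:ℝ) 1 ∧ WeaklyPorousWith μ d K E σ γ

/-- The weight `d(·,E)^{-α}`, valued in `ℝ≥0∞` (so it is `∞` on `{d(·,E)=0}`). -/
noncomputable def wgt (d : X → X → ℝ) (E : Set X) (α : ℝ) (x : X) : ℝ≥0∞ :=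
  ENNReal.ofReal (distE d E x) ^ (-α)

/-- `w` is an `A₁(X,d,μ)`-weight: `w` is locally integrable and the mean value of `w`
over every `d`-ball is bounded by a constant times its essential infimum there. -/
def MemA1 [MeasurableSpace X] (μ : Measure X) (d : X → X → ℝ) (w : X → ℝ≥0∞) : Prop :=
  (∀ x r, 0 < r → ∫⁻ y in ball d x r, w y ∂μ < ⊤) ∧
  ∃ C : ℝ, 0 < C ∧ ∀ x r, 0 < r →
    ∫⁻ y in ball d x r, w y ∂μ ≤
      ENNReal.ofReal C * essInf w (μ.restrict (ball d x r)) * μ (ball d x r)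

/-! A hole `B(y,s)` of `B(x,2r)` forces `w = d(·,E)^{-α}` to be at most `(s/2K)^{-α}` on the
positive-measure ball `B(y,s/2K)`, so `ess inf w` over `B(x,2r)` is at most that. Doubling and the
`A₁` condition transfer this bound, up to the constant `C·A^k` with `2^k ≥ 4K`, to the mean of `w`
over `B(x,r/2K)`; hence some `z` in that ball has `d(z,E) ≥ κs`, and `B(z, min(κs, r/2K))` is a
hole of `B(x,r)`. Since also `s ≤ 4Kr`, this gives `s ≤ max(1/κ, 8K²) ρ(B(x,r))`. -/

section EssInf

variable {Ω : Type*} [MeasurableSpace Ω] {μ : Measure Ω} {f : Ω → ℝ≥0∞} {s t : Set Ω}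
  {c M : ℝ≥0∞}

theorem essInf_restrict_le_of_forall_le (hts : t ⊆ s) (ht : 0 < μ t) (hf : ∀ u ∈ t, f u ≤ c) :
    essInf f (μ.restrict s) ≤ c := by
  have hpos : μ.restrict s t ≠ 0 := by
    refine (ht.trans_le ?_).ne'
    simpa only [inter_eq_self_of_subset_left hts] using Measure.le_restrict_apply s t
  obtain ⟨u, hu, hle⟩ : ∃ u ∈ t, essInf f (μ.restrict s) ≤ f u := by
    by_contra! h
    refine hpos (measure_mono_null ?_ (ae_iff.mp (ae_essInf_le (μ := μ.restrict s) (f := f))))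
    exact fun u hu => (h u hu).not_ge
  exact hle.trans (hf u hu)

theorem exists_mem_lt_of_essInf_restrict_lt (hs : MeasurableSet s)
    (h : essInf f (μ.restrict s) < c) : ∃ u ∈ s, f u < c := by
  by_contra! hc
  exact h.not_ge (le_essInf_of_ae_le c (ae_restrict_of_forall_mem hs hc))

theorem essInf_restrict_le_of_setLIntegral_le (hst : s ⊆ t) (hs0 : μ s ≠ 0) (hs : μ s ≠ ∞)
    (hf : ∫⁻ u in t, f u ∂μ ≤ c * μ t) (ht : μ t ≤ M * μ s) :
    essInf f (μ.restrict s) ≤ c * M := by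
  refine (ENNReal.mul_le_mul_iff_left hs0 hs).mp ?_
  calc essInf f (μ.restrict s) * μ s = ∫⁻ _ in s, essInf f (μ.restrict s) ∂μ :=
        (setLIntegral_const _ _).symm
    _ ≤ ∫⁻ u in s, f u ∂μ := lintegral_mono_ae ae_essInf_le
    _ ≤ ∫⁻ u in t, f u ∂μ := lintegral_mono_set hst
    _ ≤ c * (M * μ s) := hf.trans (by gcongr)
    _ = c * M * μ s := (mul_assoc _ _ _).symm

end EssInf

section QuasiDistance

variable {d : X → X → ℝ} {K : ℝ} {E : Set X}

theorem QD.const_pos (hd : QD d K) : 0 < K := one_pos.trans_le hd.1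

theorem ball_subset_ball {x : X} {r R : ℝ} (h : r ≤ R) : ball d x r ⊆ ball d x R :=
  fun _ hu => lt_of_lt_of_le hu h

theorem distE_le (hd0 : ∀ x y, 0 ≤ d x y) {x e : X} (he : e ∈ E) : distE d E x ≤ d x e :=
  csInf_le ⟨0, by rintro _ ⟨e', -, rfl⟩; exact hd0 x e'⟩ (mem_image_of_mem _ he)

theorem le_distE_of_ball_subset_compl (hd : QD d K) (hE : E.Nonempty) {y u : X} {s : ℝ}
    (hy : ball d y s ⊆ Eᶜ) (hu : d y u < s / (2 * K)) : s / (2 * K) ≤ distE d E u := by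
  have hK := hd.const_pos
  refine le_csInf (hE.image _) ?_
  rintro _ ⟨e, he, rfl⟩
  have hse : s ≤ d y e := not_lt.mp fun h => hy h he
  have hs : s = 2 * K * (s / (2 * K)) := by field_simp
  nlinarith [hd.2.2.2.2 y u e, mul_lt_mul_of_pos_left hu hK]

def holeRadii (d : X → X → ℝ) (K : ℝ) (E : Set X) (x : X) (r : ℝ) : Set ℝ :=
  {s | 0 < s ∧ s ≤ 2 * K * r ∧ ∃ y, ball d y s ⊆ ball d x r \ E}

theorem hole_eq_sSup_holeRadii (x : X) (r : ℝ) : hole d K E x r = sSup (holeRadii d K E x r) :=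
  rfl

theorem hole_nonneg (x : X) (r : ℝ) : 0 ≤ hole d K E x r :=
  Real.sSup_nonneg fun _ hs => hs.1.le

theorem le_hole {x : X} {r s : ℝ} (hs : s ∈ holeRadii d K E x r) : s ≤ hole d K E x r :=
  le_csSup ⟨2 * K * r, fun _ h => h.2.1⟩ hs

theorem mem_holeRadii_of_le_distE (hd : QD d K) {x z : X} {r t : ℝ} (ht : 0 < t)
    (htr : t ≤ r / (2 * K)) (hz : d x z < r / (2 * K)) (htE : t ≤ distE d E z) :
    t ∈ holeRadii d K E x r := by
  have hK := hd.const_pos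
  have hr : r = K * (r / (2 * K) + r / (2 * K)) := by field_simp; ring
  refine ⟨ht, ?_, z, fun u hu => ⟨?_, fun huE => ?_⟩⟩
  · have hr0 : 0 < r := (div_pos_iff_of_pos_right (by positivity)).mp (ht.trans_le htr)
    calc t ≤ r / (2 * K) := htr
      _ ≤ r := div_le_self hr0.le (by linarith [hd.1])
      _ ≤ 2 * K * r := le_mul_of_one_le_left hr0.le (by linarith [hd.1])
  · have hu : d z u < r / (2 * K) := lt_of_lt_of_le hu htr
    show d x u < r
    nlinarith [hd.2.2.2.2 x z u, mul_lt_mul_of_pos_left (add_lt_add hz hu) hK]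
  · exact (lt_of_lt_of_le hu htE).not_ge (distE_le hd.2.1 huE)

theorem holeDoubling_of_exists_far (hd : QD d K) {κ : ℝ} (hκ : 0 < κ)
    (hfar : ∀ x r, 0 < r → ∀ s ∈ holeRadii d K E x (2 * r),
      ∃ z, d x z < r / (2 * K) ∧ κ * s ≤ distE d E z) :
    HoleDoubling d K E (max (1 / κ) (8 * K ^ 2)) := by
  intro x r hr
  have hK := hd.const_pos
  rw [hole_eq_sSup_holeRadii]
  refine Real.sSup_le (fun s hs => ?_) (mul_nonneg (by positivity) (hole_nonneg x r))
  obtain ⟨z, hz, hzE⟩ := hfar x r hr s hs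
  have ht := le_hole (mem_holeRadii_of_le_distE hd (lt_min (mul_pos hκ hs.1) (by positivity))
    (min_le_right _ _) hz ((min_le_left _ _).trans hzE))
  rcases min_cases (κ * s) (r / (2 * K)) with ⟨h, -⟩ | ⟨h, -⟩ <;> rw [h] at ht
  · calc s = 1 / κ * (κ * s) := by field_simp
      _ ≤ max (1 / κ) (8 * K ^ 2) * hole d K E x r :=
          mul_le_mul (le_max_left _ _) ht (mul_pos hκ hs.1).le (by positivity)
  · calc s ≤ 8 * K ^ 2 * (r / (2 * K)) := by
          have : 8 * K ^ 2 * (r / (2 * K)) = 2 * K * (2 * r) := by field_simp; ring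
          exact this ▸ hs.2.1
      _ ≤ max (1 / κ) (8 * K ^ 2) * hole d K E x r :=
          mul_le_mul (le_max_right _ _) ht (by positivity) (by positivity)

end QuasiDistance

section Weight

variable {d : X → X → ℝ} {E : Set X} {α : ℝ}

theorem ofReal_rpow_neg_le_ofReal_rpow_neg (hα : 0 ≤ α) {a b : ℝ} (h : a ≤ b) :
    ENNReal.ofReal b ^ (-α) ≤ ENNReal.ofReal a ^ (-α) := by
  rw [ENNReal.rpow_neg, ENNReal.rpow_neg]
  exact ENNReal.inv_le_inv.mpr (ENNReal.rpow_le_rpow (ENNReal.ofReal_le_ofReal h) hα)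

theorem wgt_le_of_le_distE (hα : 0 ≤ α) {t : ℝ} {u : X} (h : t ≤ distE d E u) :
    wgt d E α u ≤ ENNReal.ofReal t ^ (-α) :=
  ofReal_rpow_neg_le_ofReal_rpow_neg hα h

theorem lt_distE_of_wgt_lt (hα : 0 ≤ α) {a : ℝ} {z : X}
    (h : wgt d E α z < ENNReal.ofReal a ^ (-α)) : a < distE d E z := by
  by_contra! ha
  exact h.not_ge (ofReal_rpow_neg_le_ofReal_rpow_neg hα ha)

end Weight

section Doubling

variable [MeasurableSpace X] {μ : Measure X} {d : X → X → ℝ} {A : ℝ}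

theorem DoublingBalls.const_pos (hA : DoublingBalls μ d A) (x : X) : 0 < A := by
  obtain ⟨hpos, -, hdbl⟩ := hA x 1 one_pos
  by_contra! h
  rw [ENNReal.ofReal_eq_zero.mpr h, zero_mul, nonpos_iff_eq_zero] at hdbl
  exact hpos.ne' (measure_mono_null (ball_subset_ball (by norm_num)) hdbl)

theorem DoublingBalls.measure_ball_two_pow_mul_le (hA : DoublingBalls μ d A) (x : X) {r : ℝ}
    (hr : 0 < r) (k : ℕ) :
    μ (ball d x (2 ^ k * r)) ≤ ENNReal.ofReal A ^ k * μ (ball d x r) := by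
  induction k with
  | zero => simp
  | succ n ih =>
    calc μ (ball d x (2 ^ (n + 1) * r)) = μ (ball d x (2 * (2 ^ n * r))) := by
          rw [pow_succ', mul_assoc]
      _ ≤ ENNReal.ofReal A * μ (ball d x (2 ^ n * r)) := (hA x _ (by positivity)).2.2
      _ ≤ ENNReal.ofReal A * (ENNReal.ofReal A ^ n * μ (ball d x r)) := by gcongr
      _ = ENNReal.ofReal A ^ (n + 1) * μ (ball d x r) := by ring

theorem DoublingBalls.measure_ball_le_of_le_two_pow_mul (hA : DoublingBalls μ d A) (x : X)
    {r R : ℝ} (hr : 0 < r) {k : ℕ} (hR : R ≤ 2 ^ k * r) :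
    μ (ball d x R) ≤ ENNReal.ofReal A ^ k * μ (ball d x r) :=
  (measure_mono (ball_subset_ball hR)).trans (hA.measure_ball_two_pow_mul_le x hr k)

end Doubling

section A1Weight

variable [MeasurableSpace X] {μ : Measure X} {d : X → X → ℝ} {K A α : ℝ} {E : Set X}

theorem essInf_wgt_le_of_mem_holeRadii (hd : QD d K) (hE : E.Nonempty) (hα : 0 ≤ α)
    (hμ : ∀ y t, 0 < t → 0 < μ (ball d y t)) {x : X} {R s : ℝ}
    (hs : s ∈ holeRadii d K E x R) :
    essInf (wgt d E α) (μ.restrict (ball d x R)) ≤ ENNReal.ofReal (s / (2 * K)) ^ (-α) := by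
  obtain ⟨hs0, -, y, hy⟩ := hs
  have hK := hd.const_pos
  have hyE : ball d y s ⊆ Eᶜ := hy.trans (sdiff_subset_compl _ _)
  refine essInf_restrict_le_of_forall_le ?_ (hμ y _ (by positivity)) fun u hu =>
    wgt_le_of_le_distE hα (le_distE_of_ball_subset_compl hd hE hyE hu)
  exact (ball_subset_ball (div_le_self hs0.le (by linarith [hd.1]))).trans (hy.trans sdiff_subset)

theorem exists_far_of_memA1 (hd : QD d K) (hmeas : ∀ x r, MeasurableSet (ball d x r))
    (hA : DoublingBalls μ d A) (hE : E.Nonempty) (hα : 0 < α) (hA1 : MemA1 μ d (wgt d E α)) :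
    ∃ κ > 0, ∀ x r, 0 < r → ∀ s ∈ holeRadii d K E x (2 * r),
      ∃ z, d x z < r / (2 * K) ∧ κ * s ≤ distE d E z := by
  obtain ⟨-, C, hC, hA1⟩ := hA1
  have hK := hd.const_pos
  have hA0 := hA.const_pos hE.some
  set k := ⌈4 * K⌉₊
  have hk : 4 * K ≤ 2 ^ k := (Nat.le_ceil _).trans (by exact_mod_cast Nat.lt_two_pow_self.le)
  set c := 2 * C * A ^ k
  have hc : 0 < c := by positivity
  -- `κ` is chosen so that `(κ s)^{-α} = 2 C A^k (s/2K)^{-α}`.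
  refine ⟨c ^ (-α)⁻¹ / (2 * K), by positivity, fun x r hr s hs => ?_⟩
  set t := s / (2 * K)
  have ht : 0 < t := div_pos hs.1 (by positivity)
  have hr' : 0 < r / (2 * K) := by positivity
  have hbig := essInf_wgt_le_of_mem_holeRadii hd hE hα.le (fun y t ht => (hA y t ht).1) hs
  have hdbl : μ (ball d x (2 * r)) ≤ ENNReal.ofReal A ^ k * μ (ball d x (r / (2 * K))) := by
    refine hA.measure_ball_le_of_le_two_pow_mul x hr' ?_
    rw [mul_div_assoc', le_div_iff₀ (by positivity)]
    nlinarith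
  have hsmall := essInf_restrict_le_of_setLIntegral_le
    (ball_subset_ball (by linarith [div_le_self hr.le (by linarith [hd.1] : (1 : ℝ) ≤ 2 * K)]))
    (hA x _ hr').1.ne' (hA x _ hr').2.1.ne (hA1 x (2 * r) (by positivity)) hdbl
  have hlt : ENNReal.ofReal C * ENNReal.ofReal t ^ (-α) * ENNReal.ofReal A ^ k <
      ENNReal.ofReal (c ^ (-α)⁻¹ / (2 * K) * s) ^ (-α) := by
    have hκs : c ^ (-α)⁻¹ / (2 * K) * s = c ^ (-α)⁻¹ * t := by ring
    have htα := Real.rpow_pos_of_pos ht (-α)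
    rw [hκs, ENNReal.ofReal_rpow_of_pos ht, ENNReal.ofReal_rpow_of_pos (by positivity),
      Real.mul_rpow (by positivity) ht.le, Real.rpow_inv_rpow hc.le (by linarith),
      ← ENNReal.ofReal_pow hA0.le, ← ENNReal.ofReal_mul hC.le,
      ← ENNReal.ofReal_mul (by positivity), ENNReal.ofReal_lt_ofReal_iff (by positivity)]
    nlinarith [mul_pos (mul_pos hC htα) (pow_pos hA0 k)]
  obtain ⟨z, hz, hzw⟩ := exists_mem_lt_of_essInf_restrict_lt (hmeas x _)
    ((hsmall.trans (by gcongr)).trans_lt hlt)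
  exact ⟨z, hz, (lt_distE_of_wgt_lt hα.le hzw).le⟩

end A1Weight

/-- If `d(·,E)^{-α} ∈ A₁(X,d,μ)` for some `α > 0`, then `ρ_{d,E}` is doubling. -/
theorem statement11 {X : Type*} [TopologicalSpace X] [MeasurableSpace X] [BorelSpace X]
    (μ : Measure X) (d : X → X → ℝ) (K A : ℝ)
    (hd : QD d K) (hb : BallsBasis d) (hA : DoublingBalls μ d A)
    (E : Set X) (hE : E.Nonempty)
    (α : ℝ) (hα : 0 < α) (hA1 : MemA1 μ d (wgt d E α)) :
    ∃ C : ℝ, 0 < C ∧ HoleDoubling d K E C := by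
  obtain ⟨κ, hκ, hfar⟩ :=
    exists_far_of_memA1 hd (fun x r => (hb.1 x r).measurableSet) hA hE hα hA1
  exact ⟨_, lt_max_of_lt_left (one_div_pos.mpr hκ), holeDoubling_of_exists_far hd hκ hfar⟩

end WPA1
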